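/- If a ∈ ℝᵈ satisfies a₁ = 0 and (M·a)₁ = 0, and M·(M·a) = r·a for some real number r with r ≠ 1, then a = 0. -/
import Mathlib

lemma stmt10_diff (d : ℕ) (M : Matrix (Fin d) (Fin d) ℝ)
    (hM : ∀ i j : Fin d, M i j = if i < j then 1 else if j < i then -1 else 0)
    (x : Fin d → ℝ) (i j : Fin d) (hij : (i : ℕ) + 1 = (j : ℕ)) :
    M.mulVec x j - M.mulVec x i = -(x i + x j) := by
  have hcoef : ∀ k : Fin d, M j k - M i k
      = (if k = i then -1 else 0) + (if k = j then -1 else 0) := by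
    intro k
    rw [hM, hM]
    simp only [Fin.lt_def, Fin.ext_iff]
    split_ifs <;> first | omega | norm_num
  simp only [Matrix.mulVec, dotProduct]
  rw [← Finset.sum_sub_distrib]
  have : ∀ k ∈ Finset.univ, M j k * x k - M i k * x k
      = ((if k = i then (-1:ℝ) else 0) + (if k = j then -1 else 0)) * x k := by
    intro k _
    rw [← sub_mul, hcoef]
  rw [Finset.sum_congr rfl this]
  simp only [add_mul, Finset.sum_add_distrib, ite_mul, zero_mul, neg_mul, one_mul,
    Finset.sum_ite_eq', Finset.mem_univ, if_true]
  ring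

/-- Let `M` be the `d×d` skew-symmetric matrix with `M i j = 1` for `i < j` (`d > 2`).
If `a₁ = 0`, `(M·a)₁ = 0` and `M·(M·a) = r • a` for some real `r ≠ 1`, then `a = 0`. -/
theorem stmt10 (d : ℕ) (hd : 2 < d)
    (M : Matrix (Fin d) (Fin d) ℝ)
    (hM : ∀ i j : Fin d, M i j = if i < j then 1 else if j < i then -1 else 0)
    (a : Fin d → ℝ) (r : ℝ) (hr : r ≠ 1)
    (ha1 : a ⟨0, by omega⟩ = 0)
    (hb1 : M.mulVec a ⟨0, by omega⟩ = 0)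
    (hMMa : M.mulVec (M.mulVec a) = r • a) :
    a = 0 := by
  set b := M.mulVec a with hb
  have key : ∀ n : ℕ, ∀ h : n < d, a ⟨n, h⟩ = 0 ∧ b ⟨n, h⟩ = 0 := by
    intro n
    induction n with
    | zero => intro h; exact ⟨ha1, hb1⟩
    | succ m ih =>
      intro h
      have hm : m < d := by omega
      obtain ⟨ha0, hb0⟩ := ih hm
      set i : Fin d := ⟨m, hm⟩
      set j : Fin d := ⟨m + 1, h⟩
      have h1 : b j - b i = -(a i + a j) := stmt10_diff d M hM a i j rfl
      have h2 : M.mulVec b j - M.mulVec b i = -(b i + b j) := stmt10_diff d M hM b i j rfl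
      rw [hMMa] at h2
      simp only [Pi.smul_apply, smul_eq_mul, ha0, hb0] at h1 h2
      -- h1 : b j - 0 = -(0 + a j), h2 : r * a j - r * 0 = -(0 + b j)
      have haj : a j = 0 := by
        have : (r - 1) * a j = 0 := by nlinarith [h1, h2]
        rcases mul_eq_zero.mp this with h | h
        · exact absurd (by linarith : r = 1) hr
        · exact h
      constructor
      · exact haj
      · have : b j = -a j := by linarith
        rw [this, haj, neg_zero]
  funext i
  have := (key i.val i.isLt).1
  simpa using this
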